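/- arXiv:1812.03253 — 4 statements merged into one kernel-verified Lean document; each statement's English description precedes it below -/
import Mathlib

section
/- Let Z = ∏_{k=1}^K [a_k, b_k] ⊆ ℝ^K be a product of closed bounded real intervals, let g : ℝ^K → ℝ^d be continuous and injective on Z, fix an index k, and let T^k : [a_k, b_k] → [a_k, b_k] be continuous. Define T' : Z → Z by T'(z_1, …, z_k, …, z_K) = (z_1, …, T^k(z_k), …, z_K), i.e. T' applies T^k to the k-th coordinate and leaves all other coordinates unchanged. Then the map T = g ∘ T' ∘ g⁻¹ is a well-defined continuous map from g '' Z to g '' Z satisfying T(g(z)) = g(T'(z)) for all z ∈ Z; hence T is an endomorphism of g '' Z that is extrinsically 1-disentangled with respect to the k-th latent variable. -/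
/-- Proposition 2 of the paper: for a continuous `g` injective on
the latent box `Z` and a continuous self-map `Tk` of the interval `[a k₀, b k₀]`,
the latent transformation `T'` updating only the `k₀`-th coordinate by `Tk`
induces a well-defined continuous endomorphism `T` of the image set `g '' Z`
with `T (g z) = g (T' z)` for all `z ∈ Z`; `T` is extrinsically 1-disentangled
with respect to the `k₀`-th latent variable. -/
theorem stmt2 (K d : ℕ) (a b : Fin K → ℝ)
    (Z : Set (Fin K → ℝ)) (hZ : Z = Set.univ.pi fun k => Set.Icc (a k) (b k))
    (g : (Fin K → ℝ) → (Fin d → ℝ)) (hg : Continuous g) (hinj : Set.InjOn g Z)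
    (k₀ : Fin K) (Tk : ℝ → ℝ)
    (hTk : ContinuousOn Tk (Set.Icc (a k₀) (b k₀)))
    (hTkmaps : Set.MapsTo Tk (Set.Icc (a k₀) (b k₀)) (Set.Icc (a k₀) (b k₀))) :
    ∃ T : (g '' Z) → (g '' Z), Continuous T ∧
      ∀ z (hz : z ∈ Z),
        (T ⟨g z, ⟨z, hz, rfl⟩⟩).1 = g (Function.update z k₀ (Tk (z k₀))) := by
  -- Z is compact
  have hZcomp : IsCompact Z :=
    hZ ▸ isCompact_univ_pi fun i => isCompact_Icc
  have hZmem : ∀ x ∈ Z, ∀ i, x i ∈ Set.Icc (a i) (b i) := by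
    intro x hx i
    rw [hZ] at hx
    exact hx i (Set.mem_univ _)
  have hZmem' : ∀ x : Fin K → ℝ, (∀ i, x i ∈ Set.Icc (a i) (b i)) → x ∈ Z := by
    intro x hx
    rw [hZ]
    exact fun i _ => hx i
  haveI : CompactSpace Z := isCompact_iff_compactSpace.mp hZcomp
  -- membership of coordinates
  have hmemk : ∀ z : Z, z.1 k₀ ∈ Set.Icc (a k₀) (b k₀) := by
    intro z
    exact hZmem z.1 z.2 k₀
  -- the latent transformation T' as a self-map of Z
  have hT'mem : ∀ z : Z, Function.update z.1 k₀ (Tk (z.1 k₀)) ∈ Z := by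
    intro z
    apply hZmem'
    intro i
    by_cases h : i = k₀
    · subst h
      simp only [Function.update_self]
      exact hTkmaps (hmemk z)
    · simp only [Function.update_of_ne h]
      exact hZmem z.1 z.2 i
  set T' : Z → Z := fun z => ⟨Function.update z.1 k₀ (Tk (z.1 k₀)), hT'mem z⟩ with hT'
  have hTkcont : Continuous fun z : Z => Tk (z.1 k₀) := by
    apply hTk.comp_continuous
    · exact (continuous_apply k₀).comp continuous_subtype_val
    · exact hmemk
  have hT'cont : Continuous T' := by
    apply Continuous.subtype_mk
    apply continuous_pi
    intro i
    by_cases h : i = k₀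
    · subst h
      simpa only [Function.update_self] using hTkcont
    · simp only [Function.update_of_ne h]
      exact (continuous_apply i).comp continuous_subtype_val
  -- homeomorphism Z ≃ g '' Z
  let e : Z ≃ g '' Z := Equiv.Set.imageOfInjOn g Z hinj
  have hecont : Continuous e := by
    apply Continuous.subtype_mk
    exact hg.comp continuous_subtype_val
  let h : Z ≃ₜ (g '' Z) := Continuous.homeoOfEquivCompactToT2 (f := e) hecont
  refine ⟨h ∘ T' ∘ h.symm, h.continuous.comp (hT'cont.comp h.symm.continuous), ?_⟩
  intro z hz
  have key : h.symm ⟨g z, ⟨z, hz, rfl⟩⟩ = ⟨z, hz⟩ := by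
    apply h.injective
    simp only [Homeomorph.apply_symm_apply]
    rfl
  simp only [Function.comp_apply, key]
  rfl
end

section
/- Let Z = ∏_{k=1}^K [a_k, b_k] ⊆ ℝ^K be a product of closed bounded real intervals, let f : ℝ^K → ℝ^m and h : ℝ^m → ℝ^d be continuous maps with g = h ∘ f injective on Z, and set V := f '' Z (the layer image set). Then for every continuous map T' : V → V, the map T := h ∘ T' ∘ (h|_V)⁻¹ is a well-defined continuous map from g '' Z to g '' Z satisfying T(h(v)) = h(T'(v)) for every v ∈ V; hence T is an endomorphism of the image set g '' Z intrinsically disentangled with respect to the full layer. -/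
/-!
Since `Z` is compact, so is `V = f '' Z`, and `h` restricted to `V` is a continuous bijection
onto `g '' Z` (injective because `g = h ∘ f` is). A continuous bijection from a compact space
onto a Hausdorff space is a homeomorphism, so `T := h ∘ T' ∘ (h|_V)⁻¹` is the conjugate of `T'`
by a homeomorphism and hence continuous.
-/

open Set

section

variable {X Y : Type*} [TopologicalSpace X] [TopologicalSpace Y] [T2Space Y]
  {V : Set X} {h : X → Y}

noncomputable def IsCompact.homeomorphImageOfInjOn (hV : IsCompact V) (hh : ContinuousOn h V)
    (hinj : InjOn h V) : V ≃ₜ h '' V :=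
  haveI : CompactSpace V := isCompact_iff_compactSpace.mp hV
  Continuous.homeoOfEquivCompactToT2 (f := Equiv.Set.imageOfInjOn h V hinj)
    (hh.domRestrict.subtype_mk _)

theorem IsCompact.exists_continuous_conj_of_injOn (hV : IsCompact V) (hh : ContinuousOn h V)
    (hinj : InjOn h V) (T' : V → V) (hT' : Continuous T') :
    ∃ T : h '' V → h '' V, Continuous T ∧
      ∀ (v : X) (hv : v ∈ V) (hy : h v ∈ h '' V), (T ⟨h v, hy⟩).1 = h (T' ⟨v, hv⟩).1 := by
  set e := hV.homeomorphImageOfInjOn hh hinj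
  refine ⟨e ∘ T' ∘ e.symm, e.continuous.comp (hT'.comp e.symm.continuous), ?_⟩
  intro v hv hy
  have hsymm : e.symm ⟨h v, hy⟩ = ⟨v, hv⟩ := e.symm_apply_eq.mpr (by rfl)
  simp only [Function.comp_apply, hsymm]
  rfl

end

/-- Proposition 3, full layer disentanglement: with `g = h ∘ f`
injective on the latent box `Z` and `V := f '' Z` the layer image set, every
continuous `T' : V → V` induces a well-defined continuous endomorphism `T` of
the image set `g '' Z` satisfying `T (h v) = h (T' v)` for every `v ∈ V`. -/
theorem stmt3 (K m d : ℕ) (a b : Fin K → ℝ)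
    (Z : Set (Fin K → ℝ)) (hZ : Z = Set.univ.pi fun k => Set.Icc (a k) (b k))
    (f : (Fin K → ℝ) → (Fin m → ℝ)) (h : (Fin m → ℝ) → (Fin d → ℝ))
    (hf : Continuous f) (hh : Continuous h)
    (hinj : Set.InjOn (h ∘ f) Z)
    (T' : (f '' Z) → (f '' Z)) (hT' : Continuous T') :
    ∃ T : ((h ∘ f) '' Z) → ((h ∘ f) '' Z), Continuous T ∧
      ∀ (v : Fin m → ℝ) (hv : v ∈ f '' Z) (hy : h v ∈ (h ∘ f) '' Z),
        (T ⟨h v, hy⟩).1 = h (T' ⟨v, hv⟩).1 := by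
  have hZc : IsCompact Z := hZ ▸ isCompact_univ_pi fun _ => isCompact_Icc
  rw [image_comp]
  exact (hZc.image hf).exists_continuous_conj_of_injOn hh.continuousOn hinj.image_of_comp T' hT'
end

section
/- Suppose the latent space splits as Z = Z_A × Z_B where Z_A ⊆ ℝ^{K_A} and Z_B ⊆ ℝ^{K_B} are products of closed bounded real intervals, the layer assignment splits as f(z_A, z_B) = (f_A(z_A), f_B(z_B)) with f_A : ℝ^{K_A} → ℝ^{m_A} and f_B : ℝ^{K_B} → ℝ^{m_B} continuous, h : ℝ^{m_A} × ℝ^{m_B} → ℝ^d is continuous, and g := h ∘ f is injective on Z. Set W := f_B '' Z_B. Then for every continuous map T^E : W → W, there is a well-defined continuous map T : g '' Z → g '' Z satisfying T(g(z_A, z_B)) = h(f_A(z_A), T^E(f_B(z_B))) for all (z_A, z_B) ∈ Z; in particular T maps g '' Z into g '' Z, so T is an endomorphism of the image set g '' Z intrinsically disentangled with respect to the second group of layer variables. -/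
/-- Proposition 4 of the paper: when the latent space splits as a
product `Z = Z_A ×ˢ Z_B` of boxes and the layer assignment splits as
`f (z_A, z_B) = (f_A z_A, f_B z_B)` (no common latent ancestors), with
`g = h ∘ f` injective on `Z`, any continuous endomorphism `T^E` of
`W := f_B '' Z_B` acting on the second block induces a well-defined continuous
endomorphism `T` of the image set `g '' Z` with
`T (g (z_A, z_B)) = h (f_A z_A, T^E (f_B z_B))`. -/
theorem stmt4 (KA KB mA mB d : ℕ) (aA bA : Fin KA → ℝ) (aB bB : Fin KB → ℝ)
    (ZA : Set (Fin KA → ℝ)) (hZA : ZA = Set.univ.pi fun k => Set.Icc (aA k) (bA k))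
    (ZB : Set (Fin KB → ℝ)) (hZB : ZB = Set.univ.pi fun k => Set.Icc (aB k) (bB k))
    (fA : (Fin KA → ℝ) → (Fin mA → ℝ)) (fB : (Fin KB → ℝ) → (Fin mB → ℝ))
    (hfA : Continuous fA) (hfB : Continuous fB)
    (h : (Fin mA → ℝ) × (Fin mB → ℝ) → (Fin d → ℝ)) (hh : Continuous h)
    (g : (Fin KA → ℝ) × (Fin KB → ℝ) → (Fin d → ℝ))
    (hg : g = fun p => h (fA p.1, fB p.2))
    (hinj : Set.InjOn g (ZA ×ˢ ZB))
    (TE : (fB '' ZB) → (fB '' ZB)) (hTE : Continuous TE) :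
    ∃ T : (g '' (ZA ×ˢ ZB)) → (g '' (ZA ×ˢ ZB)), Continuous T ∧
      ∀ (zA : Fin KA → ℝ) (hzA : zA ∈ ZA) (zB : Fin KB → ℝ) (hzB : zB ∈ ZB),
        (T ⟨g (zA, zB), ⟨(zA, zB), ⟨hzA, hzB⟩, rfl⟩⟩).1
          = h (fA zA, (TE ⟨fB zB, ⟨zB, hzB, rfl⟩⟩).1) := by
  -- Z is compact
  have hZAc : IsCompact ZA := by
    rw [hZA]; exact isCompact_univ_pi fun k => isCompact_Icc
  have hZBc : IsCompact ZB := by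
    rw [hZB]; exact isCompact_univ_pi fun k => isCompact_Icc
  have hZc : IsCompact (ZA ×ˢ ZB) := hZAc.prod hZBc
  haveI : CompactSpace (ZA ×ˢ ZB : Set _) := isCompact_iff_compactSpace.mp hZc
  -- g is continuous
  have hgc : Continuous g := by
    rw [hg]; exact hh.comp ((hfA.comp continuous_fst).prodMk (hfB.comp continuous_snd))
  -- equivalence Z ≃ g '' Z
  let e : (ZA ×ˢ ZB : Set _) ≃ (g '' (ZA ×ˢ ZB) : Set _) :=
    Equiv.Set.imageOfInjOn g (ZA ×ˢ ZB) hinj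
  have hec : Continuous e := by
    apply Continuous.subtype_mk
    exact hgc.comp continuous_subtype_val
  let E := Continuous.homeoOfEquivCompactToT2 (f := e) hec
  -- the map φ : Z → g '' Z
  have mem1 : ∀ p : (ZA ×ˢ ZB : Set _), fB p.1.2 ∈ fB '' ZB :=
    fun p => ⟨p.1.2, p.2.2, rfl⟩
  have mem2 : ∀ p : (ZA ×ˢ ZB : Set _),
      h (fA p.1.1, (TE ⟨fB p.1.2, mem1 p⟩).1) ∈ g '' (ZA ×ˢ ZB) := by
    intro p
    obtain ⟨w, hw⟩ := TE ⟨fB p.1.2, mem1 p⟩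
    obtain ⟨zB', hzB', hfw⟩ := hw
    refine ⟨(p.1.1, zB'), ⟨p.2.1, hzB'⟩, ?_⟩
    rw [hg]
    simp only
    rw [hfw]
  let φ : (ZA ×ˢ ZB : Set _) → (g '' (ZA ×ˢ ZB) : Set _) :=
    fun p => ⟨h (fA p.1.1, (TE ⟨fB p.1.2, mem1 p⟩).1), mem2 p⟩
  have hφc : Continuous φ := by
    apply Continuous.subtype_mk
    apply hh.comp
    apply Continuous.prodMk
    · exact hfA.comp (continuous_fst.comp continuous_subtype_val)
    · exact continuous_subtype_val.comp (hTE.comp (Continuous.subtype_mk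
        (hfB.comp (continuous_snd.comp continuous_subtype_val)) _))
  refine ⟨φ ∘ E.symm, hφc.comp E.symm.continuous, ?_⟩
  intro zA hzA zB hzB
  have hsymm : E.symm ⟨g (zA, zB), ⟨(zA, zB), ⟨hzA, hzB⟩, rfl⟩⟩
      = ⟨(zA, zB), ⟨hzA, hzB⟩⟩ := by
    apply E.toEquiv.injective
    show E (E.symm _) = E _
    rw [Homeomorph.apply_symm_apply]
    rfl
  simp only [Function.comp_apply, hsymm, φ]
end

section
/- Let Z = ∏_{k=1}^K [a_k, b_k] ⊆ ℝ^K be a product of closed bounded real intervals, let f : ℝ^K → ℝ^{m_A} × ℝ^{m_B} be continuous with components f(z) = (f₁(z), f₂(z)), let h : ℝ^{m_A} × ℝ^{m_B} → ℝ^d be continuous, and suppose g := h ∘ f is injective on Z. Fix v₀ ∈ ℝ^{m_B} and define the counterfactual mapping Ŷ : g '' Z → ℝ^d by Ŷ(g(z)) = h(f₁(z), v₀) for z ∈ Z (well-defined by injectivity of g). Then Ŷ is continuous on g '' Z, and if Ŷ is faithful, i.e. Ŷ maps g '' Z into g '' Z, then Ŷ is an endomorphism of g '' Z intrinsically disentangled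 with respect to the second block of layer variables: for every layer value v = f(z) with z ∈ Z, Ŷ(h(v)) = h(T'(v)) where T'(v₁, v₂) = (v₁, v₀) modifies only the second block. -/
/-- first part of Proposition 5: with `g = h ∘ f` injective on
the latent box `Z` and `f` valued in two blocks, the counterfactual mapping
`Ŷ` assigning the constant `v₀` to the second block, i.e. the map on `g '' Z`
determined by `Ŷ (g z) = h ((f z).1, v₀)`, is well defined and continuous;
moreover, if `Ŷ` is faithful (maps `g '' Z` into `g '' Z`), then it is an
endomorphism of `g '' Z` which, for every layer value `v ∈ f '' Z`, satisfies
`Ŷ (h v) = h (v.1, v₀) = h (T' v)` where `T' (v₁, v₂) = (v₁, v₀)` modifies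
only the second block: it is intrinsically disentangled with respect to the
second block of layer variables. -/
theorem stmt5 (K mA mB d : ℕ) (a b : Fin K → ℝ)
    (Z : Set (Fin K → ℝ)) (hZ : Z = Set.univ.pi fun k => Set.Icc (a k) (b k))
    (f : (Fin K → ℝ) → (Fin mA → ℝ) × (Fin mB → ℝ))
    (h : (Fin mA → ℝ) × (Fin mB → ℝ) → (Fin d → ℝ))
    (hf : Continuous f) (hh : Continuous h)
    (hinj : Set.InjOn (h ∘ f) Z)
    (v₀ : Fin mB → ℝ) :
    ∃ Yc : ((h ∘ f) '' Z) → (Fin d → ℝ),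
      Continuous Yc ∧
      (∀ z (hz : z ∈ Z), Yc ⟨h (f z), ⟨z, hz, rfl⟩⟩ = h ((f z).1, v₀)) ∧
      ((∀ y : ((h ∘ f) '' Z), Yc y ∈ (h ∘ f) '' Z) →
        ∃ T : ((h ∘ f) '' Z) → ((h ∘ f) '' Z), Continuous T ∧
          (∀ y : ((h ∘ f) '' Z), (T y).1 = Yc y) ∧
          (∀ (v : (Fin mA → ℝ) × (Fin mB → ℝ)) (hv : v ∈ f '' Z)
            (hy : h v ∈ (h ∘ f) '' Z),
            (T ⟨h v, hy⟩).1 = h (v.1, v₀))) := by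

  have hcomp : IsCompact Z := by
    rw [hZ]; exact isCompact_univ_pi fun k => isCompact_Icc
  haveI : CompactSpace Z := isCompact_iff_compactSpace.mp hcomp
  set g := h ∘ f with hg
  let e : Z ≃ (g '' Z) := Equiv.Set.imageOfInjOn g Z hinj
  have hcont : Continuous (e : Z → (g '' Z)) := by
    apply Continuous.subtype_mk
    exact (hh.comp hf).comp continuous_subtype_val
  let E : Z ≃ₜ (g '' Z) := Continuous.homeoOfEquivCompactToT2 (f := e) hcont
  refine ⟨fun y => h ((f (E.symm y : Fin K → ℝ)).1, v₀), ?_, ?_, ?_⟩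
  · exact hh.comp (((continuous_fst.comp hf).comp
      (continuous_subtype_val.comp E.symm.continuous)).prodMk continuous_const)
  · intro z hz
    have h1 : (⟨h (f z), ⟨z, hz, rfl⟩⟩ : (g '' Z)) = E ⟨z, hz⟩ := by
      apply Subtype.ext; rfl
    simp only [h1, Homeomorph.symm_apply_apply]
  · intro hfa
    refine ⟨fun y => ⟨h ((f (E.symm y : Fin K → ℝ)).1, v₀), hfa y⟩, ?_, fun y => rfl, ?_⟩
    · apply Continuous.subtype_mk
      exact hh.comp (((continuous_fst.comp hf).comp
        (continuous_subtype_val.comp E.symm.continuous)).prodMk continuous_const)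
    · rintro v ⟨z, hz, rfl⟩ hy
      have h1 : (⟨h (f z), hy⟩ : (g '' Z)) = E ⟨z, hz⟩ := by
        apply Subtype.ext; rfl
      simp only [h1, Homeomorph.symm_apply_apply]
end
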